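/- Moment range conditions for the spherical mean transform: let f be continuous and compactly supported in R^d, and let g(p, r) = ∫_{|y|=1} f(p + r y) r^{d−1} dA(y) be its spherical integral data for p ∈ S ⊂ R^d. Then for every integer k ≥ 0, the moment M_k(p) = ∫_0^∞ r^{2k} g(p, r) dr agrees on S with the restriction of a polynomial of degree at most 2k (namely a constant multiple of Q_k(p) = ∫ |p−y|^{2k} f(y) dy). -/

import Mathlib

/-!
In polar coordinates about `p`, Lebesgue measure is `r ^ (d - 1) dr dA` times the total mass
`|S^{d-1}| = d · vol(B)` of the unnormalized sphere measure, so
`∫₀^∞ r ^ n g(p, r) dr = |S^{d-1}|⁻¹ ∫ ‖p - y‖ ^ n f(y) dy`.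
For `n = 2k`, `‖p - y‖ ^ (2k) = (∑ᵢ (pᵢ - yᵢ)²) ^ k` is a polynomial of degree `2k` in `(p, y)`;
integrating out `y` against `f` leaves a polynomial of degree at most `2k` in `p`.
-/

open MeasureTheory
noncomputable section

/-- Spherical integral data: `g(p,r) = r^{d-1} ∫_{|y|=1} f(p + r y) dA(y)`. -/
def sphData {d : ℕ} (f : EuclideanSpace ℝ (Fin d) → ℝ)
    (p : EuclideanSpace ℝ (Fin d)) (r : ℝ) : ℝ :=
  r ^ (d - 1) *
    ⨍ y : Metric.sphere (0 : EuclideanSpace ℝ (Fin d)) 1,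
      f (p + r • (y : EuclideanSpace ℝ (Fin d))) ∂((volume : Measure (EuclideanSpace ℝ (Fin d))).toSphere)

open Set Metric

namespace MeasureTheory

variable {G : Type*} [NormedAddCommGroup G] [NormedSpace ℝ G]

theorem Measure.integral_volumeIoiPow (n : ℕ) (g : ℝ → G) :
    ∫ r, g r ∂Measure.volumeIoiPow n = ∫ r in Ioi (0 : ℝ), r ^ n • g r := by
  simp only [Measure.volumeIoiPow, ENNReal.ofReal]
  rw [integral_withDensity_eq_integral_smul (measurable_subtype_coe.pow_const _).real_toNNReal,
    integral_subtype_comap measurableSet_Ioi fun r ↦ (r ^ n).toNNReal • g r]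
  refine setIntegral_congr_fun measurableSet_Ioi fun r hr ↦ ?_
  rw [NNReal.smul_def, Real.coe_toNNReal _ (pow_nonneg hr.out.le _)]

variable {E : Type*} [NormedAddCommGroup E] [NormedSpace ℝ E] [MeasurableSpace E] [BorelSpace E]
  [FiniteDimensional ℝ E] [Nontrivial E] (μ : Measure E) [μ.IsAddHaarMeasure]

theorem integral_eq_integral_Ioi_pow_smul_integral_toSphere {F : E → G} (hF : Integrable F μ) :
    ∫ x, F x ∂μ = ∫ r in Ioi (0 : ℝ),
      r ^ (Module.finrank ℝ E - 1) • ∫ y, F (r • (y : E)) ∂μ.toSphere := by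
  have hmp := μ.measurePreserving_homeomorphUnitSphereProd
  have hpolar (x : ({0}ᶜ : Set E)) : F (((homeomorphUnitSphereProd E x).2 : ℝ) •
      ((homeomorphUnitSphereProd E x).1 : E)) = F x := by
    rw [← homeomorphUnitSphereProd_symm_apply_coe, Homeomorph.symm_apply_apply]
  have hcompl : MeasurableSet ({0}ᶜ : Set E) := (measurableSet_singleton 0).compl
  have hFcomap : Integrable (F ∘ ((↑) : ({0}ᶜ : Set E) → E)) (μ.comap (↑)) := by
    rw [← integrableOn_iff_comap_subtypeVal hcompl, IntegrableOn, restrict_compl_singleton]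
    exact hF
  have hFprod : Integrable (fun z ↦ F ((z.2 : ℝ) • (z.1 : E)))
      (μ.toSphere.prod (Measure.volumeIoiPow (Module.finrank ℝ E - 1))) := by
    rw [← hmp.integrable_comp_emb (Homeomorph.measurableEmbedding _)]
    simpa only [Function.comp_def, hpolar] using hFcomap
  calc ∫ x, F x ∂μ = ∫ x : ({0}ᶜ : Set E), F x ∂μ.comap Subtype.val := by
        rw [integral_subtype_comap hcompl, restrict_compl_singleton]
    _ = ∫ z, F ((z.2 : ℝ) • (z.1 : E))
          ∂μ.toSphere.prod (Measure.volumeIoiPow (Module.finrank ℝ E - 1)) := by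
        rw [← hmp.integral_comp (Homeomorph.measurableEmbedding _)]
        simp only [hpolar]
    _ = _ := by
        rw [integral_prod_symm _ hFprod]
        exact Measure.integral_volumeIoiPow _ fun r ↦ ∫ y, F (r • (y : E)) ∂μ.toSphere

end MeasureTheory

namespace MvPolynomial

variable {σ τ : Type*} [Fintype σ] [Fintype τ]

theorem eval_sumElim_eq_sum {R : Type*} [CommSemiring R] (W : MvPolynomial (σ ⊕ τ) R)
    (x : σ → R) (y : τ → R) :
    eval (Sum.elim x y) W =
      ∑ m ∈ W.support, W.coeff m * ((∏ i, x i ^ m (.inl i)) * ∏ j, y j ^ m (.inr j)) := by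
  simp only [eval_eq', Fintype.prod_sum_type, Sum.elim_inl, Sum.elim_inr]

theorem exists_totalDegree_le_eval_eq_integral_eval_sumElim_mul {Y : Type*} [MeasurableSpace Y]
    {μ : Measure Y} (W : MvPolynomial (σ ⊕ τ) ℝ) (v : Y → τ → ℝ) (f : Y → ℝ)
    (hint : ∀ n : τ → ℕ, Integrable (fun y ↦ (∏ j, v y j ^ n j) * f y) μ) :
    ∃ P : MvPolynomial σ ℝ, P.totalDegree ≤ W.totalDegree ∧
      ∀ x, eval x P = ∫ y, eval (Sum.elim x (v y)) W * f y ∂μ := by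
  refine ⟨∑ m ∈ W.support, monomial (m.comapDomain Sum.inl Sum.inl_injective.injOn)
    (W.coeff m * ∫ y, (∏ j, v y j ^ m (.inr j)) * f y ∂μ), ?_, fun x ↦ ?_⟩
  · refine (totalDegree_finsetSum _ _).trans <| Finset.sup_le fun m hm ↦
      (totalDegree_monomial_le _ _).trans <| le_trans ?_ (le_totalDegree hm)
    rw [Finsupp.sum_fintype _ _ fun _ ↦ rfl, Finsupp.sum_fintype _ _ fun _ ↦ rfl,
      Fintype.sum_sum_type]
    exact Nat.le_add_right _ _
  · simp only [eval_sumElim_eq_sum, Finset.sum_mul, map_sum, eval_monomial, Finsupp.prod_pow,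
      Finsupp.comapDomain_apply]
    rw [integral_finsetSum _ fun m _ ↦ by
      simpa only [mul_assoc] using (hint fun j ↦ m (.inr j)).const_mul
        (W.coeff m * ∏ i, x i ^ m (.inl i))]
    refine Finset.sum_congr rfl fun m _ ↦ ?_
    simp only [mul_assoc, integral_const_mul]
    ring

variable (ι : Type*) [Fintype ι]

def sqDist : MvPolynomial (ι ⊕ ι) ℝ :=
  ∑ i, (X (.inl i) - X (.inr i)) ^ 2

theorem totalDegree_sqDist_le : (sqDist ι).totalDegree ≤ 2 := by
  refine (totalDegree_finsetSum _ _).trans <| Finset.sup_le fun i _ ↦ ?_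
  have h : (X (.inl i) - X (.inr i) : MvPolynomial (ι ⊕ ι) ℝ).totalDegree ≤ 1 :=
    (totalDegree_sub _ _).trans (by simp only [totalDegree_X, max_self, le_refl])
  exact (totalDegree_pow _ _).trans (by omega)

variable {ι}

theorem eval_sqDist (x y : EuclideanSpace ℝ ι) :
    eval (Sum.elim (fun i ↦ x i) (fun i ↦ y i)) (sqDist ι) = ‖x - y‖ ^ 2 := by
  simp [sqDist, EuclideanSpace.real_norm_sq_eq]

end MvPolynomial

open MvPolynomial in
theorem exists_totalDegree_le_eval_eq_integral_norm_sub_pow_mul {ι : Type*} [Fintype ι]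
    {f : EuclideanSpace ℝ ι → ℝ} (hf : Continuous f) (hsupp : HasCompactSupport f) (k : ℕ) :
    ∃ P : MvPolynomial ι ℝ, P.totalDegree ≤ 2 * k ∧ ∀ p : EuclideanSpace ℝ ι,
      eval (fun i ↦ p i) P = ∫ y, ‖p - y‖ ^ (2 * k) * f y := by
  have hint (n : ι → ℕ) : Integrable fun y : EuclideanSpace ℝ ι ↦ (∏ j, y j ^ n j) * f y :=
    ((continuous_finsetProd _ fun j _ ↦ (EuclideanSpace.proj j).continuous.pow _).mul hf
      ).integrable_of_hasCompactSupport hsupp.mul_left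
  obtain ⟨P, hdeg, hP⟩ :=
    exists_totalDegree_le_eval_eq_integral_eval_sumElim_mul (sqDist ι ^ k) (fun y i ↦ y i) f hint
  refine ⟨P, hdeg.trans <| (totalDegree_pow _ _).trans ?_, fun p ↦ ?_⟩
  · exact (Nat.mul_le_mul_left k (totalDegree_sqDist_le ι)).trans_eq (mul_comm k 2)
  · simp only [hP, map_pow, eval_sqDist, pow_mul]

theorem integral_Ioi_pow_mul_sphData {d : ℕ} [NeZero d] {f : EuclideanSpace ℝ (Fin d) → ℝ}
    {p : EuclideanSpace ℝ (Fin d)} {n : ℕ} (hf : Integrable fun y ↦ ‖p - y‖ ^ n * f y) :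
    ∫ r in Ioi (0 : ℝ), r ^ n * sphData f p r =
      ((volume : Measure (EuclideanSpace ℝ (Fin d))).toSphere.real univ)⁻¹ *
        ∫ y, ‖p - y‖ ^ n * f y := by
  set σ := (volume : Measure (EuclideanSpace ℝ (Fin d))).toSphere
  have hshift : (fun x ↦ ‖x‖ ^ n * f (p + x)) = fun x ↦ ‖p - (p + x)‖ ^ n * f (p + x) := by
    simp only [sub_add_cancel_left, norm_neg]
  have hF : Integrable fun x : EuclideanSpace ℝ (Fin d) ↦ ‖x‖ ^ n * f (p + x) := by
    rw [hshift]
    exact hf.comp_add_left p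
  have hsphere (r : ℝ) (hr : 0 < r) :
      ∫ y, ‖r • (y : EuclideanSpace ℝ (Fin d))‖ ^ n * f (p + r • (y : EuclideanSpace ℝ (Fin d))) ∂σ
        = r ^ n * ∫ y, f (p + r • (y : EuclideanSpace ℝ (Fin d))) ∂σ := by
    rw [← integral_const_mul]
    refine integral_congr_ae (.of_forall fun y ↦ ?_)
    simp only [norm_smul, norm_eq_of_mem_sphere y, mul_one, Real.norm_of_nonneg hr.le]
  rw [← integral_add_left_eq_self _ p, ← hshift,
    integral_eq_integral_Ioi_pow_smul_integral_toSphere volume hF, ← integral_const_mul]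
  refine setIntegral_congr_fun measurableSet_Ioi fun r hr ↦ ?_
  rw [smul_eq_mul, hsphere r hr, sphData, average_eq, smul_eq_mul, finrank_euclideanSpace_fin]
  ring

theorem moment_range_conditions (d : ℕ) (hd : 1 ≤ d)
    (f : EuclideanSpace ℝ (Fin d) → ℝ) (hf : Continuous f) (hsupp : HasCompactSupport f)
    (S : Set (EuclideanSpace ℝ (Fin d))) (k : ℕ) :
    ∃ c : ℝ, 0 < c ∧ ∃ P : MvPolynomial (Fin d) ℝ, P.totalDegree ≤ 2 * k ∧
      (∀ p : EuclideanSpace ℝ (Fin d),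
        MvPolynomial.eval (fun i => p i) P =
          ∫ y : EuclideanSpace ℝ (Fin d), ‖p - y‖ ^ (2 * k) * f y) ∧
      ∀ p ∈ S,
        (∫ r in Set.Ioi (0 : ℝ), r ^ (2 * k) * sphData f p r) =
          c * MvPolynomial.eval (fun i => p i) P := by
  have : NeZero d := ⟨by omega⟩
  set σ := (volume : Measure (EuclideanSpace ℝ (Fin d))).toSphere
  have : NeZero σ := ⟨Measure.toSphere_ne_zero _⟩
  obtain ⟨P, hPdeg, hP⟩ := exists_totalDegree_le_eval_eq_integral_norm_sub_pow_mul hf hsupp k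
  refine ⟨(σ.real univ)⁻¹, inv_pos.2 measureReal_univ_pos, P, hPdeg, hP, fun p _ ↦ ?_⟩
  have hQ : Integrable fun y ↦ ‖p - y‖ ^ (2 * k) * f y :=
    (((continuous_const.sub continuous_id).norm.pow _).mul hf).integrable_of_hasCompactSupport
      hsupp.mul_left
  rw [hP, integral_Ioi_pow_mul_sphData hQ]
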